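/- arXiv:2510.22655 — 3 statements merged into one kernel-verified Lean document; each statement's English description precedes it below -/
import Mathlib

section
/- Let τ > 0, let n ≥ 1, let s_pos = 1, and let s : Fin n → ℝ be a family of negative similarities with s k ≤ 1 for all k. Suppose there is a subset S of Fin n of cardinality K ≥ 1 such that s k = 1 for all k ∈ S. Then the NT-Xent loss ℓ = -log( exp(s_pos/τ) / ( exp(s_pos/τ) + Σ_{k} exp(s k / τ) ) ) satisfies ℓ ≥ log(K + 1) > 0. -/
/-- **NT-Xent invariance lower bound (exact invariance case).**
Let `τ > 0`, `n ≥ 1`, positive similarity `s_pos = 1`, and negative similarities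
`s : Fin n → ℝ` with `s k ≤ 1` for all `k`. If there is a subset `S` of `Fin n`
of cardinality `K ≥ 1` with `s k = 1` for all `k ∈ S` (near-positives created by
an unintended encoder invariance), then the NT-Xent loss
`ℓ = -log (exp(s_pos/τ) / (exp(s_pos/τ) + Σ_k exp(s k / τ)))`
satisfies `ℓ ≥ log (K + 1) > 0`. -/
theorem ntxent_exact_invariance_lower_bound
    (τ : ℝ) (hτ : 0 < τ) (n : ℕ) (hn : 1 ≤ n)
    (s : Fin n → ℝ) (hs : ∀ k, s k ≤ 1)
    (S : Finset (Fin n)) (K : ℕ) (hKcard : S.card = K) (hK : 1 ≤ K)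
    (hS : ∀ k ∈ S, s k = 1) :
    -Real.log (Real.exp (1 / τ) /
        (Real.exp (1 / τ) + ∑ k, Real.exp (s k / τ)))
      ≥ Real.log ((K : ℝ) + 1)
    ∧ Real.log ((K : ℝ) + 1) > 0 := by
  have hE : (0:ℝ) < Real.exp (1 / τ) := Real.exp_pos _
  have hsum : (K : ℝ) * Real.exp (1 / τ) ≤ ∑ k, Real.exp (s k / τ) := by
    calc (K : ℝ) * Real.exp (1 / τ)
        = ∑ k ∈ S, Real.exp (s k / τ) := by
          rw [Finset.sum_congr rfl (fun k hk => by rw [hS k hk]), Finset.sum_const,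
            nsmul_eq_mul, hKcard]
      _ ≤ ∑ k, Real.exp (s k / τ) :=
          Finset.sum_le_sum_of_subset_of_nonneg (Finset.subset_univ S)
            (fun _ _ _ => (Real.exp_pos _).le)
  have hsumpos : (0:ℝ) < ∑ k, Real.exp (s k / τ) := by
    have hKpos : (0:ℝ) < (K:ℝ) := by exact_mod_cast hK
    nlinarith
  have hden : (0:ℝ) < Real.exp (1 / τ) + ∑ k, Real.exp (s k / τ) := by linarith
  constructor
  · rw [Real.log_div (ne_of_gt hE) (ne_of_gt hden), neg_sub]
    have h1 : ((K:ℝ)+1) * Real.exp (1/τ) ≤ Real.exp (1 / τ) + ∑ k, Real.exp (s k / τ) := by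
      nlinarith
    have h2 := Real.log_le_log (by positivity) h1
    rw [Real.log_mul (by positivity) (ne_of_gt hE), Real.log_exp] at h2
    rw [Real.log_exp]
    linarith
  · exact Real.log_pos (by exact_mod_cast Nat.lt_add_of_pos_left hK)
end

section
/- Let τ > 0, let δ ∈ [0,1), let s_pos ≤ 1, and let s : Fin n → ℝ be negative similarities. Suppose there is a subset S of Fin n of cardinality K ≥ 1 such that s k ≥ 1 - δ for all k ∈ S. Then the NT-Xent loss ℓ = -log( exp(s_pos/τ) / ( exp(s_pos/τ) + Σ_k exp(s k / τ) ) ) satisfies ℓ ≥ log(1 + K · exp(-δ/τ)). -/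
/-- **NT-Xent invariance lower bound (near-positive case, aligned positive).**
Let `τ > 0`, `δ ∈ [0,1)`, positive similarity `s_pos ≤ 1`, and negative
similarities `s : Fin n → ℝ`. If there is a subset `S` of `Fin n` of cardinality
`K ≥ 1` with `s k ≥ 1 - δ` for all `k ∈ S`, then the NT-Xent loss
`ℓ = -log (exp(s_pos/τ) / (exp(s_pos/τ) + Σ_k exp(s k / τ)))`
satisfies `ℓ ≥ log (1 + K · exp(-δ/τ))`. -/
theorem ntxent_near_positive_lower_bound
    (τ : ℝ) (hτ : 0 < τ) (δ : ℝ) (hδ0 : 0 ≤ δ) (hδ1 : δ < 1)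
    (spos : ℝ) (hspos : spos ≤ 1) (n : ℕ)
    (s : Fin n → ℝ)
    (S : Finset (Fin n)) (K : ℕ) (hKcard : S.card = K) (hK : 1 ≤ K)
    (hS : ∀ k ∈ S, 1 - δ ≤ s k) :
    -Real.log (Real.exp (spos / τ) /
        (Real.exp (spos / τ) + ∑ k, Real.exp (s k / τ)))
      ≥ Real.log (1 + (K : ℝ) * Real.exp (-δ / τ)) := by
  set A := Real.exp (spos / τ) with hA
  set T := ∑ k, Real.exp (s k / τ) with hT
  have hApos : 0 < A := Real.exp_pos _
  have hTnn : 0 ≤ T := Finset.sum_nonneg fun k _ => (Real.exp_pos _).le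
  -- Key: K * exp(-δ/τ) * A ≤ T
  have hkey : (K : ℝ) * Real.exp (-δ / τ) * A ≤ T := by
    have h1 : (K : ℝ) * Real.exp (-δ / τ) * A ≤ (K : ℝ) * Real.exp ((1 - δ) / τ) := by
      have : Real.exp (-δ / τ) * A = Real.exp (-δ / τ + spos / τ) := by
        rw [Real.exp_add]
      rw [mul_assoc, this]
      apply mul_le_mul_of_nonneg_left _ (Nat.cast_nonneg K)
      apply Real.exp_le_exp.mpr
      rw [sub_div, neg_div]
      have : spos / τ ≤ 1 / τ := div_le_div_of_nonneg_right hspos hτ.le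
      linarith [div_le_div_of_nonneg_right hspos hτ.le]
    have h2 : (K : ℝ) * Real.exp ((1 - δ) / τ) ≤ ∑ k ∈ S, Real.exp (s k / τ) := by
      have := Finset.card_nsmul_le_sum S (fun k => Real.exp (s k / τ))
        (Real.exp ((1 - δ) / τ))
        (fun k hk => Real.exp_le_exp.mpr (div_le_div_of_nonneg_right (hS k hk) hτ.le))
      simpa [hKcard, nsmul_eq_mul] using this
    have h3 : ∑ k ∈ S, Real.exp (s k / τ) ≤ T := by
      rw [hT]
      exact Finset.sum_le_sum_of_subset_of_nonneg (Finset.subset_univ S)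
        (fun k _ _ => (Real.exp_pos _).le)
    linarith
  have hsum_pos : 0 < A + T := by linarith
  rw [Real.log_div hApos.ne' hsum_pos.ne', neg_sub]
  rw [ge_iff_le, ← Real.log_div hsum_pos.ne' hApos.ne'] at *
  · rw [Real.log_div hsum_pos.ne' hApos.ne']
    have hb : (1 : ℝ) + (K : ℝ) * Real.exp (-δ / τ) ≤ (A + T) / A := by
      rw [le_div_iff₀ hApos]
      have : (1 + (K : ℝ) * Real.exp (-δ / τ)) * A = A + (K : ℝ) * Real.exp (-δ / τ) * A := by
        ring
      rw [this]
      linarith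
    have hpos : (0 : ℝ) < 1 + (K : ℝ) * Real.exp (-δ / τ) := by
      positivity
    calc Real.log (1 + (K : ℝ) * Real.exp (-δ / τ))
        ≤ Real.log ((A + T) / A) := Real.log_le_log hpos hb
      _ = Real.log (A + T) - Real.log A := Real.log_div hsum_pos.ne' hApos.ne'
end

section
/- Let τ > 0, δ ∈ [0,1), ε ≥ 0, and let the positive similarity satisfy 1 − ε ≤ s_pos ≤ 1. Suppose the negatives include a set S of cardinality K ≥ 1 with similarity at least 1 − δ each. Then the NT-Xent loss ℓ = -log( exp(s_pos/τ) / ( exp(s_pos/τ) + Σ_k exp(s k / τ) ) ) satisfies ℓ ≥ log(1 + K · exp((1 − δ − s_pos)/τ)) ≥ log(1 + K · exp(−δ/τ)); i.e., the invariance lower bound persists under approximate (rather than perfect) positive alignment. -/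
/-!
Dividing numerator and denominator by `exp (s_pos / τ)` writes the loss as
`log (1 + ∑ k, exp ((s k - s_pos) / τ))`; discarding the negatives outside `S` and bounding
each of the `K` remaining terms below by `exp ((1 - δ - s_pos) / τ)` gives the first bound,
and `s_pos ≤ 1` gives the second.
-/

open Real Finset

noncomputable def ntXentLoss {ι : Type*} [Fintype ι] (τ sPos : ℝ) (s : ι → ℝ) : ℝ :=
  -log (exp (sPos / τ) / (exp (sPos / τ) + ∑ k, exp (s k / τ)))

section

variable {ι : Type*} [Fintype ι]

theorem ntXentLoss_eq_log_one_add_sum_exp (τ sPos : ℝ) (s : ι → ℝ) :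
    ntXentLoss τ sPos s = log (1 + ∑ k, exp ((s k - sPos) / τ)) := by
  rw [ntXentLoss, ← log_inv, inv_div, add_div, div_self (exp_pos _).ne', sum_div]
  simp only [← exp_sub, sub_div]

theorem card_mul_exp_le_sum_exp {τ : ℝ} (hτ : 0 ≤ τ) (sPos a : ℝ) {s : ι → ℝ} {S : Finset ι}
    (hS : ∀ k ∈ S, a ≤ s k) :
    #S * exp ((a - sPos) / τ) ≤ ∑ k, exp ((s k - sPos) / τ) := by
  calc (#S : ℝ) * exp ((a - sPos) / τ) ≤ ∑ k ∈ S, exp ((s k - sPos) / τ) := by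
        rw [← nsmul_eq_mul]
        refine card_nsmul_le_sum _ _ _ fun k hk => ?_
        gcongr
        exact hS k hk
    _ ≤ ∑ k, exp ((s k - sPos) / τ) :=
        sum_le_univ_sum_of_nonneg fun k => (exp_pos _).le

theorem log_one_add_card_mul_exp_le_ntXentLoss {τ : ℝ} (hτ : 0 ≤ τ) (sPos a : ℝ) {s : ι → ℝ}
    {S : Finset ι} (hS : ∀ k ∈ S, a ≤ s k) :
    log (1 + #S * exp ((a - sPos) / τ)) ≤ ntXentLoss τ sPos s := by
  rw [ntXentLoss_eq_log_one_add_sum_exp]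
  exact log_le_log (by positivity) (by gcongr; exact card_mul_exp_le_sum_exp hτ sPos a hS)

end

theorem ntxent_lower_bound_approximate_alignment_general
    (τ : ℝ) (hτ : 0 < τ) (δ : ℝ) (spos : ℝ) (hspos₂ : spos ≤ 1)
    (n : ℕ) (s : Fin n → ℝ)
    (S : Finset (Fin n)) (K : ℕ) (hKcard : S.card = K)
    (hS : ∀ k ∈ S, 1 - δ ≤ s k) :
    -Real.log (Real.exp (spos / τ) /
        (Real.exp (spos / τ) + ∑ k, Real.exp (s k / τ)))
      ≥ Real.log (1 + (K : ℝ) * Real.exp ((1 - δ - spos) / τ))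
    ∧ Real.log (1 + (K : ℝ) * Real.exp ((1 - δ - spos) / τ))
      ≥ Real.log (1 + (K : ℝ) * Real.exp (-δ / τ)) := by
  subst hKcard
  refine ⟨log_one_add_card_mul_exp_le_ntXentLoss hτ.le spos (1 - δ) hS, ?_⟩
  exact log_le_log (by positivity) (by gcongr; linarith)

/-- **NT-Xent invariance lower bound under approximate positive alignment.**
Let `τ > 0`, `δ ∈ [0,1)`, `ε ≥ 0`, and let the positive similarity satisfy
`1 − ε ≤ s_pos ≤ 1`. Suppose the negatives include a set `S` of cardinality
`K ≥ 1` with similarity at least `1 − δ` each. Then the NT-Xent loss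
`ℓ = -log (exp(s_pos/τ) / (exp(s_pos/τ) + Σ_k exp(s k / τ)))` satisfies
`ℓ ≥ log (1 + K · exp((1 − δ − s_pos)/τ)) ≥ log (1 + K · exp(−δ/τ))`;
i.e., the invariance lower bound persists under approximate (rather than
perfect) positive alignment. -/
theorem ntxent_lower_bound_approximate_alignment
    (τ : ℝ) (hτ : 0 < τ) (δ : ℝ) (hδ0 : 0 ≤ δ) (hδ1 : δ < 1)
    (ε : ℝ) (hε : 0 ≤ ε) (spos : ℝ) (hspos₁ : 1 - ε ≤ spos) (hspos₂ : spos ≤ 1)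
    (n : ℕ) (s : Fin n → ℝ)
    (S : Finset (Fin n)) (K : ℕ) (hKcard : S.card = K) (hK : 1 ≤ K)
    (hS : ∀ k ∈ S, 1 - δ ≤ s k) :
    -Real.log (Real.exp (spos / τ) /
        (Real.exp (spos / τ) + ∑ k, Real.exp (s k / τ)))
      ≥ Real.log (1 + (K : ℝ) * Real.exp ((1 - δ - spos) / τ))
    ∧ Real.log (1 + (K : ℝ) * Real.exp ((1 - δ - spos) / τ))
      ≥ Real.log (1 + (K : ℝ) * Real.exp (-δ / τ)) :=
  ntxent_lower_bound_approximate_alignment_general τ hτ δ spos hspos₂ n s S K hKcard hS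
end
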